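/- Let q ≥ 5 be a prime power and let μ ∈ F_q with μ ≠ 0 and μ ≠ 1. Then ℓ_μ ∩ T_∞ = {0}, and for every t ∈ F_q the line ℓ_μ meets the tangent line T_t nontrivially (i.e. ℓ_μ ∩ T_t ≠ {0}) if and only if t⁴ - (3μ - 1)t² + μ = 0. -/

import Mathlib

/-!
Two planes of `K⁴` spanned by linearly independent pairs meet only in `0` exactly when the four
spanning vectors form a basis, i.e. when the `4 × 4` determinant of their coordinates is nonzero.
For `ℓ_μ` and `T_t` that determinant expands to `t⁴ - (3μ - 1)t² + μ`; for `ℓ_μ` and `T_∞` it is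
`-1`.
-/

open Submodule

section

variable {K : Type*} [Field K]

theorem span_range_inf_span_range_eq_bot_iff_det_ne_zero {m n : ℕ}
    {u : Fin m → Fin (m + n) → K} {v : Fin n → Fin (m + n) → K}
    (hu : LinearIndependent K u) (hv : LinearIndependent K v) :
    span K (Set.range u) ⊓ span K (Set.range v) = ⊥ ↔ (Matrix.of (Fin.append u v)).det ≠ 0 := by
  rw [← disjoint_iff, ← isUnit_iff_ne_zero, ← Matrix.isUnit_iff_isUnit_det,
    ← Matrix.linearIndependent_rows_iff_isUnit]
  change _ ↔ LinearIndependent K (Fin.append u v)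
  rw [← linearIndependent_equiv' finSumFinEquiv Fin.append_comp_sumElim]
  simp [linearIndependent_sum, hu, hv]

theorem span_pair_inf_span_pair_eq_bot_iff_det_ne_zero {u₁ u₂ v₁ v₂ : Fin 4 → K}
    (hu : LinearIndependent K ![u₁, u₂])
    (hv : LinearIndependent K ![v₁, v₂]) :
    span K {u₁, u₂} ⊓ span K {v₁, v₂} = ⊥ ↔ (Matrix.of ![u₁, u₂, v₁, v₂]).det ≠ 0 := by
  have happend : Fin.append ![u₁, u₂] ![v₁, v₂] = ![u₁, u₂, v₁, v₂] := by
    funext i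
    fin_cases i <;> rfl
  rw [← Matrix.range_cons_cons_empty u₁ u₂ ![], ← Matrix.range_cons_cons_empty v₁ v₂ ![],
    ← happend]
  exact span_range_inf_span_range_eq_bot_iff_det_ne_zero hu hv

theorem linearIndependent_pair_of_minor_ne_zero {ι : Type*} {x y : ι → K} (i j : ι)
    (h : x i * y j - x j * y i ≠ 0) : LinearIndependent K ![x, y] := by
  refine LinearIndependent.pair_iff.mpr fun a b hab => ?_
  have hi : a * x i + b * y i = 0 := by simpa using congrFun hab i
  have hj : a * x j + b * y j = 0 := by simpa using congrFun hab j
  have ha : a * (x i * y j - x j * y i) = 0 := by linear_combination y j * hi - y i * hj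
  have hb : b * (x i * y j - x j * y i) = 0 := by linear_combination x i * hj - x j * hi
  exact ⟨(mul_eq_zero.mp ha).resolve_right h, (mul_eq_zero.mp hb).resolve_right h⟩

theorem det_ell_tangent (μ t : K) :
    (Matrix.of ![![0, μ, 0, 1], ![1, 0, 1, 0], ![t ^ 3, t ^ 2, t, 1],
      ![3 * t ^ 2, 2 * t, 1, 0]]).det = t ^ 4 - (3 * μ - 1) * t ^ 2 + μ := by
  rw [Matrix.det_succ_row_zero, Fin.sum_univ_four]
  simp [Matrix.det_fin_three, Fin.succAbove]
  ring

theorem det_ell_tangentInf (μ : K) :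
    (Matrix.of ![![0, μ, 0, 1], ![1, 0, 1, 0], ![1, 0, 0, 0], ![0, 1, 0, 0]]).det = -1 := by
  rw [Matrix.det_succ_row_zero, Fin.sum_univ_four]
  simp [Matrix.det_fin_three, Fin.succAbove]
  ring

end

theorem stmt9 (F : Type*) [Field F] (μ : F) :
    let lmu : Submodule F (Fin 4 → F) := Submodule.span F {![0, μ, 0, 1], ![1, 0, 1, 0]}
    let T : F → Submodule F (Fin 4 → F) := fun t =>
      Submodule.span F {![t ^ 3, t ^ 2, t, 1], ![3 * t ^ 2, 2 * t, 1, 0]}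
    let Tinf : Submodule F (Fin 4 → F) := Submodule.span F {![1, 0, 0, 0], ![0, 1, 0, 0]}
    lmu ⊓ Tinf = ⊥ ∧
    ∀ t : F, (lmu ⊓ T t ≠ ⊥ ↔ t ^ 4 - (3 * μ - 1) * t ^ 2 + μ = 0) := by
  intro lmu T Tinf
  have hℓ : LinearIndependent F ![![0, μ, 0, 1], ![1, 0, 1, 0]] :=
    linearIndependent_pair_of_minor_ne_zero 0 3 (by simp)
  refine ⟨?_, fun t => ?_⟩
  · rw [span_pair_inf_span_pair_eq_bot_iff_det_ne_zero hℓ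
      (linearIndependent_pair_of_minor_ne_zero 0 1 (by simp)), det_ell_tangentInf]
    exact neg_ne_zero.mpr one_ne_zero
  · rw [Ne, span_pair_inf_span_pair_eq_bot_iff_det_ne_zero hℓ
      (linearIndependent_pair_of_minor_ne_zero 2 3 (by simp)), det_ell_tangent, not_not]
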